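/- arXiv:2512.10519 — 9 statements merged into one kernel-verified Lean document; each statement's English description precedes it below -/
import Mathlib

section
/- Let m ≥ 1 be an integer and μ > 0 a real number. For every real ξ with −√μ ≤ ξ ≤ √μ, one has (∑_{k=0}^{m−1} ((2m−1)·(m−1+k)! / ((m−1−k)!·(2k+1)!)) · (−√μ/2)^{m−1−k} · (ξ+√μ)^k) · √(ξ+√μ) = ((−1)^{m−1} · μ^{(2m−1)/4} / 2^{m−3/2}) · sin( ((2m−1)/2) · arccos(−ξ/√μ) ). -/
/-!
Put `n = m - 1` and `θ = arccos (-ξ / √μ)`. Then `ξ + √μ = √μ (1 - cos θ) = 2 √μ sin² (θ / 2)`, and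
after pulling out `(-√μ / 2) ^ n` the sum becomes a polynomial in `(ξ + √μ) / (-√μ / 2) = 2 cos θ - 2`.
That polynomial expresses `sin ((2n + 1) x) / sin x` in the variable `v = 2 cos 2x - 2`: both satisfy
`P (n + 2) = (2 + v) P (n + 1) - P n`, which for the coefficients
`C(n+k+1, 2k+1) + C(n+k, 2k+1) = (2n + 1) (n + k)! / ((n - k)! (2k + 1)!)` is Pascal's rule.
-/

open Finset Real
open scoped Nat

def oddSinCoeff (n k : ℕ) : ℕ :=
  (n + k + 1).choose (2 * k + 1) + (n + k).choose (2 * k + 1)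

lemma oddSinCoeff_eq_zero_of_lt {n k : ℕ} (h : n < k) : oddSinCoeff n k = 0 := by
  simp only [oddSinCoeff, Nat.add_eq_zero_iff]
  constructor <;> exact Nat.choose_eq_zero_of_lt (by omega)

@[simp]
lemma oddSinCoeff_zero_right (n : ℕ) : oddSinCoeff n 0 = 2 * n + 1 := by
  simp only [oddSinCoeff, add_zero, mul_zero, zero_add, Nat.choose_one_right]
  ring

lemma choose_add_two_add_choose (N j : ℕ) :
    (N + 2).choose (j + 2) + N.choose (j + 2) = 2 * (N + 1).choose (j + 2) + N.choose j := by
  simp only [Nat.choose_succ_succ]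
  ring

lemma oddSinCoeff_add_two (n k : ℕ) :
    oddSinCoeff (n + 2) (k + 1) + oddSinCoeff n (k + 1) =
      2 * oddSinCoeff (n + 1) (k + 1) + oddSinCoeff (n + 1) k := by
  have h₁ := choose_add_two_add_choose (n + k + 2) (2 * k + 1)
  have h₂ := choose_add_two_add_choose (n + k + 1) (2 * k + 1)
  simp only [oddSinCoeff]
  ring_nf at h₁ h₂ ⊢
  omega

lemma two_mul_add_one_mul_oddSinCoeff {n k : ℕ} (h : k ≤ n) :
    (2 * k + 1) * oddSinCoeff n k = (2 * n + 1) * (n + k).choose (2 * k) := by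
  obtain ⟨d, rfl⟩ := Nat.exists_eq_add_of_le h
  have h₁ := Nat.add_one_mul_choose_eq (k + d + k) (2 * k)
  have h₂ := Nat.choose_succ_right_eq (k + d + k) (2 * k)
  rw [show k + d + k - 2 * k = d by omega] at h₂
  simp only [oddSinCoeff]
  linarith

lemma oddSinCoeff_eq_factorial {n k : ℕ} (h : k ≤ n) :
    (oddSinCoeff n k : ℝ) = (2 * n + 1) * (n + k)! / ((n - k)! * (2 * k + 1)!) := by
  have key : ((2 * k + 1 : ℕ) : ℝ) * oddSinCoeff n k = (2 * n + 1) * (n + k).choose (2 * k) := by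
    exact_mod_cast two_mul_add_one_mul_oddSinCoeff h
  rw [Nat.cast_choose ℝ (by omega), show n + k - 2 * k = n - k by omega] at key
  rw [Nat.factorial_succ, eq_div_iff (by positivity)]
  push_cast at key ⊢
  field_simp at key
  linear_combination key

def oddSinPoly (n : ℕ) (v : ℝ) : ℝ :=
  ∑ k ∈ range (n + 1), (oddSinCoeff n k : ℝ) * v ^ k

lemma oddSinPoly_eq_sum_range {n N : ℕ} (h : n + 1 ≤ N) (v : ℝ) :
    oddSinPoly n v = ∑ k ∈ range N, (oddSinCoeff n k : ℝ) * v ^ k :=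
  (eventually_constant_sum (fun k hk ↦ by
    rw [oddSinCoeff_eq_zero_of_lt (by omega), Nat.cast_zero, zero_mul]) h).symm

lemma oddSinPoly_add_two (n : ℕ) (v : ℝ) :
    oddSinPoly (n + 2) v = (2 + v) * oddSinPoly (n + 1) v - oddSinPoly n v := by
  have hc (k : ℕ) : (oddSinCoeff (n + 2) (k + 1) : ℝ) + oddSinCoeff n (k + 1) =
      2 * oddSinCoeff (n + 1) (k + 1) + oddSinCoeff (n + 1) k := by
    exact_mod_cast oddSinCoeff_add_two n k
  have e₀ := oddSinPoly_eq_sum_range (n := n) (N := n + 3) (by omega) v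
  have e₁ := oddSinPoly_eq_sum_range (n := n + 1) (N := n + 3) (by omega) v
  rw [eq_sub_iff_add_eq, add_mul, e₀, oddSinPoly]
  nth_rw 1 [e₁]
  have hsum : ∑ k ∈ range (n + 2),
      ((oddSinCoeff (n + 2) (k + 1) : ℝ) * v ^ (k + 1) + oddSinCoeff n (k + 1) * v ^ (k + 1)) =
      ∑ k ∈ range (n + 2),
        (2 * ((oddSinCoeff (n + 1) (k + 1) : ℝ) * v ^ (k + 1)) + v * (oddSinCoeff (n + 1) k * v ^ k)) :=
    sum_congr rfl fun k _ ↦ by linear_combination v ^ (k + 1) * hc k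
  rw [sum_add_distrib, sum_add_distrib, ← mul_sum, ← mul_sum] at hsum
  rw [oddSinPoly, sum_range_succ' _ (n + 2), sum_range_succ' _ (n + 2), sum_range_succ' _ (n + 2)]
  simp only [oddSinCoeff_zero_right, pow_zero, mul_one] at hsum ⊢
  push_cast
  linarith

lemma sin_two_mul_add_one_mul (n : ℕ) (x : ℝ) :
    sin ((2 * n + 1) * x) = sin x * oddSinPoly n (2 * cos (2 * x) - 2) := by
  induction n using Nat.twoStepInduction with
  | zero => simp [oddSinPoly]
  | one =>
    have h : oddSinPoly 1 (2 * cos (2 * x) - 2) = 1 + 2 * cos (2 * x) := by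
      norm_num [oddSinPoly, sum_range_succ, oddSinCoeff]
      ring
    rw [h, Nat.cast_one, cos_two_mul_eq_one_sub, show (2 * 1 + 1 : ℝ) = 3 by norm_num, sin_three_mul]
    ring
  | more n ih₀ ih₁ =>
    have h := sin_add_sin ((2 * ↑(n + 2) + 1) * x) ((2 * n + 1) * x)
    rw [show ((2 * ↑(n + 2) + 1) * x + (2 * n + 1) * x) / 2 = (2 * ↑(n + 1) + 1) * x by
        push_cast; ring,
      show ((2 * ↑(n + 2) + 1) * x - (2 * n + 1) * x) / 2 = 2 * x by push_cast; ring,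
      ih₀, ih₁] at h
    rw [oddSinPoly_add_two]
    linear_combination h

lemma sum_factorial_mul_pow_eq_oddSinPoly (n : ℕ) {a : ℝ} (ha : a ≠ 0) (u : ℝ) :
    ∑ k ∈ range (n + 1),
        (2 * n + 1) * ((n + k)! : ℝ) / ((n - k)! * (2 * k + 1)!) * a ^ (n - k) * u ^ k
      = a ^ n * oddSinPoly n (u / a) := by
  rw [oddSinPoly, mul_sum]
  refine sum_congr rfl fun k hk ↦ ?_
  have hkn : k ≤ n := Nat.lt_succ_iff.mp (mem_range.mp hk)
  rw [oddSinCoeff_eq_factorial hkn, div_pow, ← pow_sub_mul_pow a hkn]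
  field_simp

lemma sqrt_one_sub_cos {θ : ℝ} (h₀ : 0 ≤ θ) (h₁ : θ ≤ 2 * π) :
    √(1 - cos θ) = √2 * sin (θ / 2) := by
  have hsin : 0 ≤ sin (θ / 2) := sin_nonneg_of_nonneg_of_le_pi (by linarith) (by linarith)
  have h := cos_two_mul_eq_one_sub (θ / 2)
  rw [mul_div_cancel₀ θ two_ne_zero] at h
  rw [h, sub_sub_cancel, sqrt_mul zero_le_two, sqrt_sq hsin]

lemma rpow_div_two_rpow_eq_sqrt_mul_pow {μ : ℝ} (hμ : 0 ≤ μ) {m : ℕ} (hm : 1 ≤ m) :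
    μ ^ ((2 * (m : ℝ) - 1) / 4) / (2 : ℝ) ^ ((m : ℝ) - 3 / 2) =
      √2 * √(√μ) * (√μ / 2) ^ (m - 1) := by
  obtain ⟨n, rfl⟩ := Nat.exists_eq_add_of_le' hm
  have hμ' : μ ^ ((2 * ((n + 1 : ℕ) : ℝ) - 1) / 4) = √(√μ) * √μ ^ n := by
    rw [sqrt_eq_rpow, sqrt_eq_rpow, ← rpow_mul hμ, ← rpow_natCast, ← rpow_mul hμ,
      ← rpow_add' hμ (by positivity)]
    congr 1
    push_cast
    ring
  have h₂ : (2 : ℝ) ^ (((n + 1 : ℕ) : ℝ) - 3 / 2) = 2 ^ n / √2 := by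
    rw [show ((n + 1 : ℕ) : ℝ) - 3 / 2 = n - 1 / 2 by push_cast; ring, rpow_sub two_pos,
      rpow_natCast, ← sqrt_eq_rpow]
  rw [hμ', h₂, Nat.add_sub_cancel, div_pow]
  field_simp

/-- Closed form of the genus-zero disk amplitude of the m-th multicritical DT model
at the conformal background (Proposition 2). -/
theorem multicritical_DT_disk_amplitude_closed_form
    (m : ℕ) (hm : 1 ≤ m) (μ : ℝ) (hμ : 0 < μ) (ξ : ℝ)
    (hξ₁ : -Real.sqrt μ ≤ ξ) (hξ₂ : ξ ≤ Real.sqrt μ) :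
    (∑ k ∈ Finset.range m,
        ((2 * (m : ℝ) - 1) * (Nat.factorial (m - 1 + k)) /
            ((Nat.factorial (m - 1 - k)) * (Nat.factorial (2 * k + 1))))
          * (-(Real.sqrt μ) / 2) ^ (m - 1 - k) * (ξ + Real.sqrt μ) ^ k)
        * Real.sqrt (ξ + Real.sqrt μ)
      = ((-1 : ℝ) ^ (m - 1) * μ ^ ((2 * (m : ℝ) - 1) / 4) / (2 : ℝ) ^ ((m : ℝ) - 3 / 2))
          * Real.sin (((2 * (m : ℝ) - 1) / 2) * Real.arccos (-ξ / Real.sqrt μ)) := by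
  rw [mul_div_assoc, rpow_div_two_rpow_eq_sqrt_mul_pow hμ.le hm]
  obtain ⟨n, rfl⟩ := Nat.exists_eq_add_of_le' hm
  set r := √μ
  have hr : 0 < r := sqrt_pos.2 hμ
  set θ := arccos (-ξ / r)
  have hcos : cos θ = -ξ / r := cos_arccos
    ((le_div_iff₀ hr).2 (by linarith)) ((div_le_one hr).2 (by linarith))
  have hv : (ξ + r) / (-r / 2) = 2 * cos (2 * (θ / 2)) - 2 := by
    rw [mul_div_cancel₀ θ two_ne_zero, hcos]
    field_simp
    ring
  have hsqrt : √(ξ + r) = √r * (√2 * sin (θ / 2)) := by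
    rw [← sqrt_one_sub_cos (arccos_nonneg _) (by linarith [arccos_le_pi (-ξ / r), pi_pos]),
      ← sqrt_mul hr.le, mul_sub, hcos]
    congr 1
    field_simp
    ring
  have hθ : (2 * (n : ℝ) + 1) / 2 * θ = (2 * n + 1) * (θ / 2) := by ring
  simp only [Nat.add_sub_cancel]
  rw [show (2 * ((n + 1 : ℕ) : ℝ) - 1) = 2 * n + 1 by push_cast; ring,
    sum_factorial_mul_pow_eq_oddSinPoly n (by linarith : -r / 2 < 0).ne (ξ + r), hv, hθ,
    sin_two_mul_add_one_mul, hsqrt, neg_div, neg_pow]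
  ring
end

section
/- For each integer m ≥ 1 set a_m = (2m−1)²/(8π²). Then for every real x ≥ 0, the limit as m → ∞ of sin( ((2m−1)/2) · arccos(1 − x/a_m) ) equals sin(2π√x). -/
open Real Filter

lemma arcsin_div_self_tendsto :
    Filter.Tendsto (fun t : ℝ => Real.arcsin t / t)
      (nhdsWithin 0 {0}ᶜ) (nhds 1) := by
  have h := Real.hasDerivAt_arcsin (by norm_num : (0:ℝ) ≠ -1) (by norm_num : (0:ℝ) ≠ 1)
  rw [hasDerivAt_iff_tendsto_slope] at h
  have hval : (1 : ℝ) / Real.sqrt (1 - (0:ℝ) ^ 2) = 1 := by norm_num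
  rw [hval] at h
  refine h.congr fun t => ?_
  simp [slope_def_field, Real.arcsin_zero]

lemma arccos_one_sub_two_sq {t : ℝ} (ht0 : 0 ≤ t) (ht1 : t ≤ 1) :
    Real.arccos (1 - 2 * t ^ 2) = 2 * Real.arcsin t := by
  have hmem : -1 ≤ t := le_trans (by norm_num) ht0
  have hcos : Real.cos (2 * Real.arcsin t) = 1 - 2 * t ^ 2 := by
    rw [Real.cos_two_mul, Real.cos_arcsin,
      Real.sq_sqrt (by nlinarith : (0:ℝ) ≤ 1 - t ^ 2)]
    ring
  rw [← hcos, Real.arccos_cos]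
  · exact mul_nonneg (by norm_num) (Real.arcsin_nonneg.mpr ht0)
  · have := Real.arcsin_le_pi_div_two t
    linarith

/-- With `a_m = (2m−1)²/(8π²)`, for every real `x ≥ 0` the normalized multicritical
DT disk amplitude `sin(((2m−1)/2)·arccos(1 − x/a_m))` converges, as `m → ∞`, to the
Jackiw–Teitelboim disk spectral curve `sin(2π√x)`. -/
theorem multicritical_DT_to_JT_gravity_limit (x : ℝ) (hx : 0 ≤ x) :
    Filter.Tendsto
      (fun m : ℕ =>
        Real.sin (((2 * (m : ℝ) - 1) / 2) *
          Real.arccos (1 - x / ((2 * (m : ℝ) - 1) ^ 2 / (8 * Real.pi ^ 2)))))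
      Filter.atTop
      (nhds (Real.sin (2 * Real.pi * Real.sqrt x))) := by
  rcases eq_or_lt_of_le hx with h0 | hxpos
  · -- x = 0 : the function is constantly 0
    have hx0 : x = 0 := h0.symm
    subst hx0
    simp only [zero_div, sub_zero, Real.arccos_one, mul_zero, Real.sin_zero,
      Real.sqrt_zero]
    exact tendsto_const_nhds
  · set c : ℝ := 2 * Real.pi * Real.sqrt x with hc
    have hcpos : 0 < c := by
      have := Real.pi_pos
      have := Real.sqrt_pos.mpr hxpos
      positivity
    -- the sequence u m = 2m - 1 tends to ∞
    have hu : Filter.Tendsto (fun m : ℕ => 2 * (m : ℝ) - 1) Filter.atTop Filter.atTop := by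
      apply Filter.tendsto_atTop_add_const_right
      have h2 : Filter.Tendsto (fun n : ℕ => (n : ℝ)) Filter.atTop Filter.atTop :=
        tendsto_natCast_atTop_atTop
      exact h2.const_mul_atTop (by norm_num)
    -- t m = c / (2m-1) tends to 0 within {0}ᶜ
    have ht0 : Filter.Tendsto (fun m : ℕ => c / (2 * (m : ℝ) - 1)) Filter.atTop (nhds 0) :=
      Filter.Tendsto.div_atTop tendsto_const_nhds hu
    have htne : ∀ᶠ m : ℕ in Filter.atTop, c / (2 * (m : ℝ) - 1) ∈ ({0}ᶜ : Set ℝ) := by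
      filter_upwards [hu.eventually_gt_atTop 0] with m hm
      exact ne_of_gt (div_pos hcpos hm)
    have ht : Filter.Tendsto (fun m : ℕ => c / (2 * (m : ℝ) - 1)) Filter.atTop
        (nhdsWithin 0 {0}ᶜ) := tendsto_nhdsWithin_iff.mpr ⟨ht0, htne⟩
    -- the quotient arcsin t / t tends to 1
    have hq := arcsin_div_self_tendsto.comp ht
    -- hence c * (arcsin t / t) tends to c
    have hD : Filter.Tendsto
        (fun m : ℕ => c * (Real.arcsin (c / (2 * (m : ℝ) - 1)) / (c / (2 * (m : ℝ) - 1))))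
        Filter.atTop (nhds c) := by
      have := (tendsto_const_nhds : Filter.Tendsto (fun _ : ℕ => c)
        Filter.atTop (nhds c)).mul hq
      simpa [Function.comp] using this
    -- eventual equality of the arguments
    have heq : ∀ᶠ m : ℕ in Filter.atTop,
        ((2 * (m : ℝ) - 1) / 2) *
          Real.arccos (1 - x / ((2 * (m : ℝ) - 1) ^ 2 / (8 * Real.pi ^ 2)))
        = c * (Real.arcsin (c / (2 * (m : ℝ) - 1)) / (c / (2 * (m : ℝ) - 1))) := by
      filter_upwards [hu.eventually_ge_atTop (max 1 c)] with m hm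
      set u : ℝ := 2 * (m : ℝ) - 1 with hudef
      have hu1 : (1 : ℝ) ≤ u := le_trans (le_max_left _ _) hm
      have huc : c ≤ u := le_trans (le_max_right _ _) hm
      have hupos : 0 < u := lt_of_lt_of_le one_pos hu1
      set t : ℝ := c / u with htdef
      have ht0' : 0 ≤ t := le_of_lt (div_pos hcpos hupos)
      have ht1 : t ≤ 1 := (div_le_one hupos).mpr huc
      have htne' : t ≠ 0 := ne_of_gt (div_pos hcpos hupos)
      have hpi : Real.pi ≠ 0 := Real.pi_ne_zero
      have harg : 1 - x / (u ^ 2 / (8 * Real.pi ^ 2)) = 1 - 2 * t ^ 2 := by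
        have hc2 : c ^ 2 = 4 * Real.pi ^ 2 * x := by
          rw [hc, mul_pow, mul_pow, Real.sq_sqrt hx]; ring
        rw [htdef, div_pow, hc2]
        field_simp
        ring
      rw [harg, arccos_one_sub_two_sq ht0' ht1]
      rw [htdef]
      field_simp
    -- conclude
    have hmain : Filter.Tendsto
        (fun m : ℕ => ((2 * (m : ℝ) - 1) / 2) *
          Real.arccos (1 - x / ((2 * (m : ℝ) - 1) ^ 2 / (8 * Real.pi ^ 2))))
        Filter.atTop (nhds c) := hD.congr' (heq.mono fun m h => h.symm)
    exact (Real.continuous_sin.tendsto c).comp hmain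
end

section
/- Let α > β be real numbers and define ξ(η) = −(α+β)/2 + ((α−β)/4)(η + η^{−1}) for η > 1, with derivative ξ′(η) = ((α−β)/4)(1 − η^{−2}). Write σ(ξ) = (ξ+α)(ξ+β). Then for all η₁, η₂ > 1 with η₁ ≠ η₂, setting ξᵢ = ξ(ηᵢ), one has (1/(2(ξ₁−ξ₂)²)) · ( (ξ₁ξ₂ + ((α+β)/2)(ξ₁+ξ₂) + αβ) / √(σ(ξ₁)σ(ξ₂)) − 1 ) · ξ′(η₁) · ξ′(η₂) = 1 / (η₁η₂ − 1)². -/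
set_option maxHeartbeats 1000000 in
/-- Pullback of the genus-zero CDT cylinder amplitude along the Zhukovsky map
`ξ(η) = −(α+β)/2 + ((α−β)/4)(η + η⁻¹)` (with `ξ′(η) = ((α−β)/4)(1 − η⁻²)`) is the
bi-differential kernel `1/(η₁η₂ − 1)²`. -/
theorem multicritical_CDT_cylinder_Zhukovsky (α β η₁ η₂ ξ₁ ξ₂ : ℝ)
    (hαβ : β < α) (h₁ : 1 < η₁) (h₂ : 1 < η₂) (hne : η₁ ≠ η₂)
    (hξ₁ : ξ₁ = -(α + β) / 2 + (α - β) / 4 * (η₁ + η₁⁻¹))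
    (hξ₂ : ξ₂ = -(α + β) / 2 + (α - β) / 4 * (η₂ + η₂⁻¹)) :
    (1 / (2 * (ξ₁ - ξ₂) ^ 2)) *
        ((ξ₁ * ξ₂ + ((α + β) / 2) * (ξ₁ + ξ₂) + α * β) /
            Real.sqrt (((ξ₁ + α) * (ξ₁ + β)) * ((ξ₂ + α) * (ξ₂ + β))) - 1)
        * ((α - β) / 4 * (1 - η₁⁻¹ ^ 2)) * ((α - β) / 4 * (1 - η₂⁻¹ ^ 2))
      = 1 / (η₁ * η₂ - 1) ^ 2 := by
  have h10 : (0:ℝ) < η₁ := by linarith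
  have h20 : (0:ℝ) < η₂ := by linarith
  have h1n : η₁ ≠ 0 := ne_of_gt h10
  have h2n : η₂ ≠ 0 := ne_of_gt h20
  set c : ℝ := (α - β) / 4 with hc
  have hαβ4 : (0:ℝ) < α - β := by linarith
  have hcpos : 0 < c := by positivity
  have hcn : c ≠ 0 := ne_of_gt hcpos
  have hd1 : 0 < η₁ - η₁⁻¹ := by
    rw [sub_pos]; exact (inv_lt_one_of_one_lt₀ h₁).trans h₁
  have hd2 : 0 < η₂ - η₂⁻¹ := by
    rw [sub_pos]; exact (inv_lt_one_of_one_lt₀ h₂).trans h₂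
  have hd1n : η₁ - η₁⁻¹ ≠ 0 := ne_of_gt hd1
  have hd2n : η₂ - η₂⁻¹ ≠ 0 := ne_of_gt hd2
  have hsq : ((ξ₁ + α) * (ξ₁ + β)) * ((ξ₂ + α) * (ξ₂ + β))
      = (c ^ 2 * (η₁ - η₁⁻¹) * (η₂ - η₂⁻¹)) ^ 2 := by
    rw [hξ₁, hξ₂]; field_simp; ring
  rw [hsq, Real.sqrt_sq (by positivity)]
  have hprod : (1:ℝ) < η₁ * η₂ := one_lt_mul_of_lt_of_le h₁ h₂.le
  have hpne : η₁ * η₂ - 1 ≠ 0 := by linarith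
  have hdiff : η₁ - η₂ ≠ 0 := sub_ne_zero.mpr hne
  have e1 : ξ₁ * ξ₂ + ((α + β) / 2) * (ξ₁ + ξ₂) + α * β
      = c ^ 2 * ((η₁ + η₁⁻¹) * (η₂ + η₂⁻¹) - 4) := by
    rw [hξ₁, hξ₂]; ring
  have e2 : (ξ₁ - ξ₂) ^ 2
      = c ^ 2 * (η₁ - η₂) ^ 2 * (η₁ * η₂ - 1) ^ 2 / (η₁ * η₂) ^ 2 := by
    rw [hξ₁, hξ₂]; field_simp; ring
  have e3 : (1 - η₁⁻¹ ^ 2) = (η₁ - η₁⁻¹) / η₁ := by field_simp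
  have e4 : (1 - η₂⁻¹ ^ 2) = (η₂ - η₂⁻¹) / η₂ := by field_simp
  have e5 : c ^ 2 * ((η₁ + η₁⁻¹) * (η₂ + η₂⁻¹) - 4) /
        (c ^ 2 * (η₁ - η₁⁻¹) * (η₂ - η₂⁻¹)) - 1
      = 2 * (η₁ - η₂) ^ 2 / (η₁ * η₂ * ((η₁ - η₁⁻¹) * (η₂ - η₂⁻¹))) := by
    rw [div_sub_one (by positivity)]
    rw [div_eq_div_iff (by positivity) (by positivity)]
    field_simp
    ring
  rw [e1, e2, e3, e4, e5]
  have f1 : η₁ - η₁⁻¹ = (η₁ ^ 2 - 1) / η₁ := by field_simp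
  have f2 : η₂ - η₂⁻¹ = (η₂ ^ 2 - 1) / η₂ := by field_simp
  have f1n : η₁ ^ 2 - 1 ≠ 0 := by nlinarith
  have f2n : η₂ ^ 2 - 1 ≠ 0 := by nlinarith
  rw [f1, f2]
  field_simp
end

section
/- Define Ω₂(a,b) = 1/(2√(ab)·(√a+√b)²) for positive reals a, b. Let ξ₁, ξ₂, ξ₃ be positive reals with ξ₁ ≠ ξ₂ and ξ₁ ≠ ξ₃. Then (1/4)·ξ₁^{−1}·ξ₂^{−3/2}·ξ₃^{−3/2} = Ω₂(ξ₁,ξ₂)·Ω₂(ξ₁,ξ₃) + D₂ + D₃, where D₂ is the derivative at t = ξ₂ of the function t ↦ (Ω₂(ξ₁,ξ₃) − Ω₂(t,ξ₃)) / (ξ₁ − t), and D₃ is the derivative at t = ξ₃ of the function t ↦ (Ω₂(ξ₁,ξ₂) − Ω₂(ξ₂,t)) / (ξ₁ − t). -/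
/-! In the coordinates `ξᵢ = xᵢ²` the kernel becomes the rational function
`Ω₂(x², y²) = 1 / (2xy(x+y)²)`, and by the chain rule through `√` its partial derivative is
`-(3x+y) / (4x³y(x+y)³)`. Both finite-difference derivatives are then rational in `x, y, z`,
and (A.4) becomes an identity of rational functions. -/

/-- The two-point kernel `Ω₂(a,b) = 1/(2√(ab)(√a+√b)²)` of the multicritical DT model. -/
noncomputable def Omega2 (a b : ℝ) : ℝ :=
  1 / (2 * Real.sqrt (a * b) * (Real.sqrt a + Real.sqrt b) ^ 2)

theorem HasDerivAt.divided_difference {𝕜 : Type*} [NontriviallyNormedField 𝕜] {g : 𝕜 → 𝕜}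
    {g' x : 𝕜} (c : 𝕜) (hg : HasDerivAt g g' x) (hx : c ≠ x) :
    HasDerivAt (fun t => (g c - g t) / (c - t)) ((g c - g x - g' * (c - x)) / (c - x) ^ 2) x := by
  refine (((hasDerivAt_const x (g c)).fun_sub hg).fun_div
    ((hasDerivAt_const x c).fun_sub (hasDerivAt_id' x)) (sub_ne_zero.mpr hx)).congr_deriv ?_
  ring

theorem Omega2_comm (a b : ℝ) : Omega2 a b = Omega2 b a := by
  rw [Omega2, Omega2, mul_comm a, add_comm √a]

theorem Omega2_sq_sq {x y : ℝ} (hx : 0 ≤ x) (hy : 0 ≤ y) :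
    Omega2 (x ^ 2) (y ^ 2) = 1 / (2 * x * y * (x + y) ^ 2) := by
  rw [Omega2, Real.sqrt_mul (by positivity), Real.sqrt_sq hx, Real.sqrt_sq hy]
  ring

theorem hasDerivAt_Omega2_left {x y : ℝ} (hx : 0 < x) (hy : 0 < y) :
    HasDerivAt (fun t => Omega2 t (y ^ 2)) (-(3 * x + y) / (4 * x ^ 3 * y * (x + y) ^ 3))
      (x ^ 2) := by
  have hsqrt : HasDerivAt Real.sqrt (1 / (2 * x)) (x ^ 2) := by
    simpa [Real.sqrt_sq hx.le] using Real.hasDerivAt_sqrt (by positivity : x ^ 2 ≠ 0)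
  have hkernel : HasDerivAt (fun s => (2 * s * y * (s + y) ^ 2)⁻¹)
      (-(3 * x + y) / (2 * x ^ 2 * y * (x + y) ^ 3)) x := by
    refine ((((hasDerivAt_id' x).const_mul 2).mul_const y).fun_mul
      (((hasDerivAt_id' x).add_const y).fun_pow 2)).fun_inv (by positivity) |>.congr_deriv ?_
    field_simp
    ring
  have hfun : (fun t => Omega2 t (y ^ 2)) = fun t => (2 * √t * y * (√t + y) ^ 2)⁻¹ := by
    ext t
    rw [Omega2, Real.sqrt_mul' _ (by positivity), Real.sqrt_sq hy.le]
    ring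
  rw [hfun]
  refine (hkernel.comp_of_eq (x ^ 2) hsqrt (Real.sqrt_sq hx.le).symm).congr_deriv ?_
  field_simp
  ring

theorem hasDerivAt_Omega2_right {x y : ℝ} (hx : 0 < x) (hy : 0 < y) :
    HasDerivAt (fun t => Omega2 (y ^ 2) t) (-(3 * x + y) / (4 * x ^ 3 * y * (x + y) ^ 3))
      (x ^ 2) := by
  simpa only [Omega2_comm (y ^ 2)] using hasDerivAt_Omega2_left hx hy

theorem sq_rpow_neg_three_halves {y : ℝ} (hy : 0 ≤ y) : (y ^ 2) ^ (-(3 / 2) : ℝ) = (y ^ 3)⁻¹ := by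
  rw [← Real.rpow_natCast y 2, ← Real.rpow_mul hy]
  norm_num

/-- Equation (A.4) of the paper: the key algebraic identity for the two-point kernel `Ω₂`
used in the proof of Proposition 1,
`(1/4)ξ₁⁻¹ξ₂^{−3/2}ξ₃^{−3/2} = Ω₂(ξ₁,ξ₂)Ω₂(ξ₁,ξ₃) + D₂ + D₃`. -/
theorem omega2_key_identity (ξ₁ ξ₂ ξ₃ : ℝ) (h₁ : 0 < ξ₁) (h₂ : 0 < ξ₂) (h₃ : 0 < ξ₃)
    (h₁₂ : ξ₁ ≠ ξ₂) (h₁₃ : ξ₁ ≠ ξ₃) :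
    (1 / 4) * ξ₁⁻¹ * ξ₂ ^ (-(3 / 2) : ℝ) * ξ₃ ^ (-(3 / 2) : ℝ)
      = Omega2 ξ₁ ξ₂ * Omega2 ξ₁ ξ₃
        + deriv (fun t => (Omega2 ξ₁ ξ₃ - Omega2 t ξ₃) / (ξ₁ - t)) ξ₂
        + deriv (fun t => (Omega2 ξ₁ ξ₂ - Omega2 ξ₂ t) / (ξ₁ - t)) ξ₃ := by
  obtain ⟨x, hx, rfl⟩ : ∃ x > 0, ξ₁ = x ^ 2 := ⟨√ξ₁, Real.sqrt_pos.2 h₁, (Real.sq_sqrt h₁.le).symm⟩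
  obtain ⟨y, hy, rfl⟩ : ∃ y > 0, ξ₂ = y ^ 2 := ⟨√ξ₂, Real.sqrt_pos.2 h₂, (Real.sq_sqrt h₂.le).symm⟩
  obtain ⟨z, hz, rfl⟩ : ∃ z > 0, ξ₃ = z ^ 2 := ⟨√ξ₃, Real.sqrt_pos.2 h₃, (Real.sq_sqrt h₃.le).symm⟩
  rw [Omega2_comm (x ^ 2) (y ^ 2), ((hasDerivAt_Omega2_left hy hz).divided_difference _ h₁₂).deriv,
    ((hasDerivAt_Omega2_right hz hy).divided_difference _ h₁₃).deriv]
  simp only [Omega2_sq_sq hy.le hx.le, Omega2_sq_sq hx.le hz.le, Omega2_sq_sq hy.le hz.le,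
    sq_rpow_neg_three_halves hy.le, sq_rpow_neg_three_halves hz.le]
  have hxy : x ^ 2 - y ^ 2 ≠ 0 := sub_ne_zero.2 h₁₂
  have hxz : x ^ 2 - z ^ 2 ≠ 0 := sub_ne_zero.2 h₁₃
  field_simp
  ring
end

section
/- For every real μ > 0, the real polynomial identity X·(X² − (√μ/2)X − μ/4)²·(X + √μ) − (X³ − (5/8)μX)² = −(5/64)·μ²·X² + (μ^{5/2}/16)·X holds; in particular the left-hand side has degree at most 2. -/
open Polynomial

/-- The m = 3 multicritical DT determining equations at the conformal background in
coefficient form: for `μ > 0`,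
`X·(X² − (√μ/2)X − μ/4)²·(X + √μ) − (X³ − (5/8)μX)² = −(5/64)μ²X² + (μ^{5/2}/16)X`
in `ℝ[X]`; in particular the left-hand side has degree at most 2. -/
theorem m3_multicritical_DT_disk_determining_identity (μ : ℝ) (hμ : 0 < μ) :
    (Polynomial.X *
          (Polynomial.X ^ 2 - Polynomial.C (Real.sqrt μ / 2) * Polynomial.X
            - Polynomial.C (μ / 4)) ^ 2
          * (Polynomial.X + Polynomial.C (Real.sqrt μ))
        - (Polynomial.X ^ 3 - Polynomial.C ((5 / 8) * μ) * Polynomial.X) ^ 2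
      = -Polynomial.C ((5 / 64) * μ ^ 2) * Polynomial.X ^ 2
          + Polynomial.C (μ ^ ((5 : ℝ) / 2) / 16) * Polynomial.X)
    ∧ (Polynomial.X *
          (Polynomial.X ^ 2 - Polynomial.C (Real.sqrt μ / 2) * Polynomial.X
            - Polynomial.C (μ / 4)) ^ 2
          * (Polynomial.X + Polynomial.C (Real.sqrt μ))
        - (Polynomial.X ^ 3 - Polynomial.C ((5 / 8) * μ) * Polynomial.X) ^ 2).degree ≤ 2 := by
  set s := Real.sqrt μ with hsdef
  have hs : s ^ 2 = μ := Real.sq_sqrt hμ.le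
  have hr : μ ^ ((5 : ℝ) / 2) = s ^ 5 := by
    rw [hsdef, Real.sqrt_eq_rpow, ← Real.rpow_natCast (μ ^ ((1:ℝ)/2)) 5, ← Real.rpow_mul hμ.le]
    norm_num
  have e1 : Polynomial.C (μ / 4) = Polynomial.C (s ^ 2 / 4) := by rw [hs]
  have e2 : Polynomial.C ((5 / 8) * μ) = Polynomial.C ((5 / 8) * s ^ 2) := by rw [hs]
  have e3 : Polynomial.C ((5 / 64) * μ ^ 2) = Polynomial.C ((5 / 64) * s ^ 4) := by
    rw [← hs]; ring_nf
  have e4 : Polynomial.C (μ ^ ((5 : ℝ) / 2) / 16) = Polynomial.C (s ^ 5 / 16) := by rw [hr]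
  have key : (Polynomial.X *
          (Polynomial.X ^ 2 - Polynomial.C (Real.sqrt μ / 2) * Polynomial.X
            - Polynomial.C (μ / 4)) ^ 2
          * (Polynomial.X + Polynomial.C (Real.sqrt μ))
        - (Polynomial.X ^ 3 - Polynomial.C ((5 / 8) * μ) * Polynomial.X) ^ 2
      = -Polynomial.C ((5 / 64) * μ ^ 2) * Polynomial.X ^ 2
          + Polynomial.C (μ ^ ((5 : ℝ) / 2) / 16) * Polynomial.X) := by
    apply Polynomial.funext
    intro x
    simp only [Polynomial.eval_mul, Polynomial.eval_add, Polynomial.eval_sub,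
      Polynomial.eval_pow, Polynomial.eval_neg, Polynomial.eval_X, Polynomial.eval_C, ← hsdef]
    rw [hr, ← hs]
    ring
  refine ⟨key, ?_⟩
  rw [key]
  apply (Polynomial.degree_add_le _ _).trans
  rw [sup_le_iff]
  constructor
  · apply (Polynomial.degree_mul_le _ _).trans
    rw [Polynomial.degree_neg]
    calc (Polynomial.C ((5:ℝ)/64 * μ^2)).degree + (Polynomial.X ^ 2 : ℝ[X]).degree
        ≤ 0 + 2 := add_le_add Polynomial.degree_C_le (Polynomial.degree_X_pow_le 2)
      _ = 2 := by norm_num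
  · apply (Polynomial.degree_mul_le _ _).trans
    calc (Polynomial.C (μ ^ ((5:ℝ)/2) / 16)).degree + (Polynomial.X : ℝ[X]).degree
        ≤ 0 + 1 := add_le_add Polynomial.degree_C_le Polynomial.degree_X_le
      _ ≤ 2 := by norm_num
end

section
/- For every real μ > 0 and every real ξ > −√μ, one has 1/(8(ξ+√μ)²) + 2·(ξ − √μ/2)·√(ξ+√μ) · (2ξ + 5√μ)/(72·μ·(ξ+√μ)^{5/2}) = 1/(18μ). -/
/-! With `s = √μ` and `x = ξ + √μ`, the factor `√x` of the disk amplitude cancels against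
`x ^ (5/2) = x² √x`, and the identity reduces to `9 s² + (2ξ − s)(2ξ + 5s) = 4 (ξ + s)²`. -/

lemma Real.rpow_natCast_add_half {x : ℝ} (hx : 0 ≤ x) (n : ℕ) :
    x ^ ((n : ℝ) + 1 / 2) = x ^ n * √x := by
  rw [Real.rpow_add' hx (by positivity), Real.rpow_natCast, Real.sqrt_eq_rpow]

lemma genus_one_SD_rational {s ξ : ℝ} (hs : s ≠ 0) (hx : ξ + s ≠ 0) :
    1 / (8 * (ξ + s) ^ 2) + 2 * (ξ - s / 2) * ((2 * ξ + 5 * s) / (72 * s ^ 2 * (ξ + s) ^ 2))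
      = 1 / (18 * s ^ 2) := by
  field_simp
  ring

lemma genus_one_SD_of_sq_eq {μ s ξ : ℝ} (hs : s ≠ 0) (hsμ : s ^ 2 = μ) (hx : 0 < ξ + s) :
    1 / (8 * (ξ + s) ^ 2)
      + 2 * ((ξ - s / 2) * √(ξ + s))
        * ((2 * ξ + 5 * s) / (72 * μ * (ξ + s) ^ ((5 : ℝ) / 2)))
      = 1 / (18 * μ) := by
  subst hsμ
  have cancel_root : √(ξ + s) * ((2 * ξ + 5 * s) / (72 * s ^ 2 * (ξ + s) ^ ((5 : ℝ) / 2)))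
      = (2 * ξ + 5 * s) / (72 * s ^ 2 * (ξ + s) ^ 2) := by
    rw [show (5 / 2 : ℝ) = (2 : ℕ) + 1 / 2 by norm_num, Real.rpow_natCast_add_half hx.le]
    field_simp
  calc _ = 1 / (8 * (ξ + s) ^ 2) + 2 * (ξ - s / 2)
          * (√(ξ + s) * ((2 * ξ + 5 * s) / (72 * s ^ 2 * (ξ + s) ^ ((5 : ℝ) / 2)))) := by ring
    _ = 1 / (18 * s ^ 2) := by
      rw [cancel_root]
      exact genus_one_SD_rational hs hx.ne'

/-- Genus-one Schwinger–Dyson relation of pure DT: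
`F₂⁽⁰⁾(ξ,ξ) + 2F₁⁽⁰⁾(ξ)F₁⁽¹⁾(ξ) = 1/(18μ)` for every `μ > 0` and `ξ > −√μ`. -/
theorem pure_DT_genus_one_SD (μ ξ : ℝ) (hμ : 0 < μ) (hξ : -Real.sqrt μ < ξ) :
    1 / (8 * (ξ + Real.sqrt μ) ^ 2)
      + 2 * ((ξ - Real.sqrt μ / 2) * Real.sqrt (ξ + Real.sqrt μ))
        * ((2 * ξ + 5 * Real.sqrt μ) /
            (72 * μ * (ξ + Real.sqrt μ) ^ ((5 : ℝ) / 2)))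
      = 1 / (18 * μ) :=
  genus_one_SD_of_sq_eq (Real.sqrt_pos.2 hμ).ne' (Real.sq_sqrt hμ.le) (by linarith)
end

section
/- For every real μ > 0 and every real ξ > −√μ, one has 1/(8(ξ+√μ)²) − 2·(ξ² − (√μ/2)ξ − μ/4)·√(ξ+√μ) · (2ξ + 3√μ)/(20·μ^{3/2}·(ξ+√μ)^{5/2}) = (√μ − ξ)/(5·μ^{3/2}). -/
/-- Genus-one Schwinger–Dyson relation of the m = 3 multicritical DT at the conformal
background: `F₂⁽⁰⁾(ξ,ξ) + 2F₁⁽⁰⁾(ξ)F₁⁽¹⁾(ξ) = (√μ − ξ)/(5μ^{3/2})` for `μ > 0`, `ξ > −√μ`. -/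
theorem m3_multicritical_DT_genus_one_SD (μ ξ : ℝ) (hμ : 0 < μ) (hξ : -Real.sqrt μ < ξ) :
    1 / (8 * (ξ + Real.sqrt μ) ^ 2)
      - 2 * ((ξ ^ 2 - (Real.sqrt μ / 2) * ξ - μ / 4) * Real.sqrt (ξ + Real.sqrt μ))
        * ((2 * ξ + 3 * Real.sqrt μ) /
            (20 * μ ^ ((3 : ℝ) / 2) * (ξ + Real.sqrt μ) ^ ((5 : ℝ) / 2)))
      = (Real.sqrt μ - ξ) / (5 * μ ^ ((3 : ℝ) / 2)) := by
  have hs : 0 < Real.sqrt μ := Real.sqrt_pos.2 hμ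
  set s := Real.sqrt μ with hsdef
  have ht : 0 < ξ + s := by linarith
  set r := Real.sqrt (ξ + s) with hrdef
  have hr : 0 < r := Real.sqrt_pos.2 ht
  have hr2 : r ^ 2 = ξ + s := Real.sq_sqrt ht.le
  have hs2 : s ^ 2 = μ := Real.sq_sqrt hμ.le
  have h1 : μ ^ ((3 : ℝ) / 2) = μ * s := by
    rw [show ((3 : ℝ) / 2) = 1 + 1 / 2 by norm_num, Real.rpow_add hμ, Real.rpow_one,
      hsdef, Real.sqrt_eq_rpow]
  have h2 : (ξ + s) ^ ((5 : ℝ) / 2) = (ξ + s) ^ 2 * r := by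
    rw [show ((5 : ℝ) / 2) = 2 + 1 / 2 by norm_num, Real.rpow_add ht,
      Real.rpow_two, hrdef, Real.sqrt_eq_rpow, sq]
  have hξ2 : ξ = r ^ 2 - s := by linarith
  rw [h1, h2, hξ2, ← hs2]
  have hs' : s ≠ 0 := hs.ne'
  have hr' : r ≠ 0 := hr.ne'
  have ht' : r ^ 2 - s + s ≠ 0 := by simpa using (pow_ne_zero 2 hr')
  field_simp
  ring
end

section
/- For every real μ > 0 and every real ξ > −√μ, one has (8ξ⁴ + 56√μ·ξ³ + 159μ·ξ² + 182μ^{3/2}·ξ + 71μ²)/(216·μ²·(ξ+√μ)⁷) + 2·(ξ − √μ/2)·√(ξ+√μ) · 7·(64ξ⁴ + 352√μ·ξ³ + 816μ·ξ² + 1006μ^{3/2}·ξ + 613μ²)/(15552·μ^{7/2}·(ξ+√μ)^{11/2}) + ( (2ξ + 5√μ)/(72·μ·(ξ+√μ)^{5/2}) )² = 14/(243·μ^{7/2}). -/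
/-- Genus-two Schwinger–Dyson relation of pure DT:
`F₂⁽¹⁾(ξ,ξ) + 2F₁⁽⁰⁾(ξ)F₁⁽²⁾(ξ) + F₁⁽¹⁾(ξ)² = 14/(243μ^{7/2})` for `μ > 0`, `ξ > −√μ`. -/
theorem pure_DT_genus_two_SD (μ ξ : ℝ) (hμ : 0 < μ) (hξ : -Real.sqrt μ < ξ) :
    (8 * ξ ^ 4 + 56 * Real.sqrt μ * ξ ^ 3 + 159 * μ * ξ ^ 2
        + 182 * μ ^ ((3 : ℝ) / 2) * ξ + 71 * μ ^ 2)
        / (216 * μ ^ 2 * (ξ + Real.sqrt μ) ^ 7)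
      + 2 * ((ξ - Real.sqrt μ / 2) * Real.sqrt (ξ + Real.sqrt μ))
        * (7 * (64 * ξ ^ 4 + 352 * Real.sqrt μ * ξ ^ 3 + 816 * μ * ξ ^ 2
              + 1006 * μ ^ ((3 : ℝ) / 2) * ξ + 613 * μ ^ 2)
            / (15552 * μ ^ ((7 : ℝ) / 2) * (ξ + Real.sqrt μ) ^ ((11 : ℝ) / 2)))
      + ((2 * ξ + 5 * Real.sqrt μ) / (72 * μ * (ξ + Real.sqrt μ) ^ ((5 : ℝ) / 2))) ^ 2
      = 14 / (243 * μ ^ ((7 : ℝ) / 2)) := by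
  set s := Real.sqrt μ with hs
  have hspos : 0 < s := Real.sqrt_pos.mpr hμ
  have hs2 : s ^ 2 = μ := Real.sq_sqrt hμ.le
  have hxs : 0 < ξ + s := by linarith
  set t := Real.sqrt (ξ + s) with ht
  have htpos : 0 < t := Real.sqrt_pos.mpr hxs
  have ht2 : t ^ 2 = ξ + s := Real.sq_sqrt hxs.le
  have h32 : μ ^ ((3 : ℝ) / 2) = μ * s := by
    rw [show (3 : ℝ) / 2 = 1 + 1 / 2 by norm_num, Real.rpow_add hμ, Real.rpow_one,
      ← Real.sqrt_eq_rpow]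
  have h72 : μ ^ ((7 : ℝ) / 2) = μ ^ 3 * s := by
    rw [show (7 : ℝ) / 2 = 3 + 1 / 2 by norm_num, Real.rpow_add hμ, ← Real.sqrt_eq_rpow,
      show μ ^ (3:ℝ) = μ ^ (3:ℕ) from Real.rpow_natCast μ 3]
  have h112 : (ξ + s) ^ ((11 : ℝ) / 2) = (ξ + s) ^ 5 * t := by
    rw [show (11 : ℝ) / 2 = 5 + 1 / 2 by norm_num, Real.rpow_add hxs, ← Real.sqrt_eq_rpow,
      show (ξ+s) ^ (5:ℝ) = (ξ+s) ^ (5:ℕ) from Real.rpow_natCast _ 5]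
  have h52 : (ξ + s) ^ ((5 : ℝ) / 2) = (ξ + s) ^ 2 * t := by
    rw [show (5 : ℝ) / 2 = 2 + 1 / 2 by norm_num, Real.rpow_add hxs, ← Real.sqrt_eq_rpow,
      show (ξ+s) ^ (2:ℝ) = (ξ+s) ^ (2:ℕ) from Real.rpow_natCast _ 2]
  rw [h32, h72, h112, h52]
  have hxi : ξ = t ^ 2 - s := by linarith [ht2]
  rw [hxi, ← hs2]
  have hμne : (s : ℝ) ≠ 0 := ne_of_gt hspos
  have htne : (t : ℝ) ≠ 0 := ne_of_gt htpos
  have htsne : t ^ 2 - s + s ≠ 0 := by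
    rw [sub_add_cancel]; positivity
  field_simp
  ring
end

section
/- Let μ₃ > 0 be real. In the ring ℝ[[g]] of formal power series in one variable g, there is a unique pair of power series (t₁, t₂) with constant coefficients (−μ₃^{1/3}, μ₃^{2/3}) satisfying 2t₁³ − 3t₁t₂ − μ₃ = 0 and 3t₁⁴ − 3t₂² − 4g = 0 (where g also denotes the power series X). Moreover, the coefficients of g¹ through g⁶ in t₁ are −2/(3μ₃), 2/(3μ₃^{7/3}), −76/(81μ₃^{11/3}), 110/(81μ₃⁵), −412/(243μ₃^{19/3}), 6748/(6561μ₃^{23/3}), and the coefficients of g¹ through g⁶ in t₂ are 2/(3μ₃^{2/3}), −2/(9μ₃²), −4/(81μ₃^{10/3}), 170/(243μ₃^{14/3}), −580/(243μ₃⁶), 42476/(6561μ₃^{22/3}). -/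
/-!
Write `μ₃ = a³`. Giving `t₁, t₂, g` the weights `1, 2, 4` makes the system homogeneous, so the
solution at `a` is `t₁(g) = a u(g / a⁴)`, `t₂(g) = a² v(g / a⁴)` with `(u, v)` the solution at
`a = 1`; this is where the powers `μ₃^((1 - 4n)/3)` and `μ₃^((2 - 4n)/3)` come from.

At `a = 1`, eliminating `v = (2u³ - 1) / (3u)` turns the quartic equation into the sextic
`5u⁶ + 4u³ - 12gu² - 1 = 0`, of which `u = -1` is a simple root at `g = 0`; Hensel's lemma in
`K⟦g⟧` lifts it.

Two solutions with the same constant terms agree modulo every ideal modulo which their equations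
agree: eliminating `t₂ - s₂` leaves `t₁ - s₁` times a series with constant term `-6a⁴`. With the
zero ideal this is uniqueness; modulo `g⁷` it compares the solution with the tabulated degree-6
truncation, which solves the system to order `g⁷`.
-/

open PowerSeries

theorem exists_isRoot_of_constantCoeff_eval_eq_zero {R : Type*} [CommRing R]
    {f : Polynomial R⟦X⟧} (hf : f.Monic) (a₀ : R⟦X⟧) (h₀ : constantCoeff (f.eval a₀) = 0)
    (h₁ : IsUnit (constantCoeff (f.derivative.eval a₀))) :
    ∃ a, f.IsRoot a ∧ constantCoeff a = constantCoeff a₀ := by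
  have hmem : f.eval a₀ ∈ Ideal.span {X} := Ideal.mem_span_singleton.mpr (X_dvd_iff.mpr h₀)
  obtain ⟨a, ha, hsub⟩ := HenselianRing.is_henselian f hf a₀ hmem
    ((isUnit_iff_constantCoeff.mpr h₁).map _)
  refine ⟨a, ha, ?_⟩
  rw [← sub_eq_zero, ← map_sub, ← X_dvd_iff, ← Ideal.mem_span_singleton]
  exact hsub

/-- `a` plays the role of `μ₃^(1/3)`. -/
def IsBranchPoint {R : Type*} [CommRing R] (a : R) (t₁ t₂ : R⟦X⟧) : Prop :=
  constantCoeff t₁ = -a ∧ constantCoeff t₂ = a ^ 2 ∧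
    2 * t₁ ^ 3 - 3 * t₁ * t₂ - C (a ^ 3) = 0 ∧ 3 * t₁ ^ 4 - 3 * t₂ ^ 2 - 4 * X = 0

section Field

variable {K : Type*} [Field K]

theorem IsBranchPoint.rescale {a : K} (ha : a ≠ 0) {u v : K⟦X⟧} (h : IsBranchPoint 1 u v) :
    IsBranchPoint a (C a * rescale (a ^ 4)⁻¹ u) (C (a ^ 2) * rescale (a ^ 4)⁻¹ v) := by
  obtain ⟨hu, hv, hc, hq⟩ := h
  have hinv : C a ^ 4 * C (a ^ 4)⁻¹ = (1 : K⟦X⟧) := by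
    rw [← map_pow, ← map_mul, mul_inv_cancel₀ (pow_ne_zero 4 ha), map_one]
  have hc' := congrArg (fun f => C (a ^ 3) * PowerSeries.rescale (a ^ 4)⁻¹ f) hc
  have hq' := congrArg (fun f => C (a ^ 4) * PowerSeries.rescale (a ^ 4)⁻¹ f) hq
  simp only [map_sub, map_mul, map_pow, map_ofNat, map_one, map_zero, mul_zero, rescale_X]
    at hc' hq'
  have hrescale₀ (f : K⟦X⟧) :
      constantCoeff (PowerSeries.rescale (a ^ 4)⁻¹ f) = constantCoeff f := by
    rw [← coeff_zero_eq_constantCoeff_apply, coeff_rescale, pow_zero, one_mul,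
      coeff_zero_eq_constantCoeff_apply]
  refine ⟨?_, ?_, ?_, ?_⟩ <;> simp only [map_mul, map_pow, constantCoeff_C, hrescale₀, hu, hv]
  · ring
  · ring
  · linear_combination hc'
  · linear_combination hq' + 4 * X * hinv

variable [CharZero K]

theorem exists_branch_sextic_root :
    ∃ u : K⟦X⟧, constantCoeff u = -1 ∧ 5 * u ^ 6 + 4 * u ^ 3 - 12 * X * u ^ 2 - 1 = 0 := by
  have hc : (5 : K⟦X⟧) * C 5⁻¹ = 1 := by
    rw [← map_ofNat C, ← map_mul, mul_inv_cancel₀ (by norm_num), map_one]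
  let f : Polynomial K⟦X⟧ := Polynomial.X ^ 6 +
    Polynomial.C (C 5⁻¹) * (4 * Polynomial.X ^ 3 - Polynomial.C (12 * X) * Polynomial.X ^ 2 - 1)
  have hf : f.Monic := by simp only [f]; monicity!
  obtain ⟨u, hu, hu₀⟩ := exists_isRoot_of_constantCoeff_eval_eq_zero hf (-1)
    (by norm_num [f, map_ofNat])
    (by norm_num [f, map_ofNat])
  refine ⟨u, by simpa using hu₀, ?_⟩
  simp only [Polynomial.IsRoot, f, Polynomial.eval_add, Polynomial.eval_sub, Polynomial.eval_mul,
    Polynomial.eval_pow, Polynomial.eval_C, Polynomial.eval_X, Polynomial.eval_ofNat,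
    Polynomial.eval_one] at hu
  linear_combination 5 * hu - (4 * u ^ 3 - 12 * X * u ^ 2 - 1) * hc

theorem isBranchPoint_one_of_sextic {u : K⟦X⟧} (hu₀ : constantCoeff u = -1)
    (hu : 5 * u ^ 6 + 4 * u ^ 3 - 12 * X * u ^ 2 - 1 = 0) :
    IsBranchPoint 1 u ((2 * u ^ 3 - 1) * (3 * u)⁻¹) := by
  have h3u : constantCoeff (3 * u) ≠ 0 := by simp [hu₀, map_ofNat]
  have hw := PowerSeries.mul_inv_cancel _ h3u
  have h3u2 : 3 * u ^ 2 ≠ 0 := fun h => by simpa [hu₀, map_ofNat] using congrArg constantCoeff h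
  refine ⟨hu₀, ?_, ?_, ?_⟩
  · norm_num [hu₀, map_ofNat]
  · rw [one_pow, map_one]
    linear_combination (1 - 2 * u ^ 3) * hw
  · refine (mul_eq_zero.mp ?_).resolve_left h3u2
    -- `3u²` times the quartic equation is the sextic
    linear_combination hu - (2 * u ^ 3 - 1) ^ 2 * (3 * u * (3 * u)⁻¹ + 1) * hw

theorem exists_isBranchPoint_one : ∃ u v : K⟦X⟧, IsBranchPoint 1 u v :=
  let ⟨u, hu₀, hu⟩ := exists_branch_sextic_root (K := K)
  ⟨u, _, isBranchPoint_one_of_sextic hu₀ hu⟩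

theorem sub_mem_of_branch_congr {a : K} (ha : a ≠ 0) (I : Ideal K⟦X⟧) {t₁ t₂ s₁ s₂ : K⟦X⟧}
    (ht₁ : constantCoeff t₁ = -a) (ht₂ : constantCoeff t₂ = a ^ 2)
    (hs₁ : constantCoeff s₁ = -a) (hs₂ : constantCoeff s₂ = a ^ 2)
    (hcubic : 2 * t₁ ^ 3 - 3 * t₁ * t₂ - (2 * s₁ ^ 3 - 3 * s₁ * s₂) ∈ I)
    (hquartic : 3 * t₁ ^ 4 - 3 * t₂ ^ 2 - (3 * s₁ ^ 4 - 3 * s₂ ^ 2) ∈ I) :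
    t₁ - s₁ ∈ I ∧ t₂ - s₂ ∈ I := by
  set A := 2 * (t₁ ^ 2 + t₁ * s₁ + s₁ ^ 2) - 3 * s₂
  set B := 3 * (t₁ ^ 3 + t₁ ^ 2 * s₁ + t₁ * s₁ ^ 2 + s₁ ^ 3)
  have hD : IsUnit ((t₂ + s₂) * A - t₁ * B) := by
    have hD₀ : constantCoeff ((t₂ + s₂) * A - t₁ * B) = -6 * a ^ 4 := by
      simp only [A, B, map_sub, map_add, map_mul, map_pow, map_ofNat, ht₁, ht₂, hs₁, hs₂]
      ring
    rw [isUnit_iff_constantCoeff, hD₀, isUnit_iff_ne_zero]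
    simp [ha]
  have h3t₁ : IsUnit (3 * t₁) := by
    rw [isUnit_iff_constantCoeff, isUnit_iff_ne_zero, map_mul, map_ofNat, ht₁]
    simp [ha]
  have h₁ : t₁ - s₁ ∈ I := by
    rw [← I.mul_unit_mem_iff_mem hD]
    convert I.sub_mem (I.mul_mem_left (t₂ + s₂) hcubic) (I.mul_mem_left t₁ hquartic) using 1
    ring
  refine ⟨h₁, ?_⟩
  rw [← I.mul_unit_mem_iff_mem h3t₁]
  convert I.sub_mem (I.mul_mem_left A h₁) hcubic using 1
  ring

theorem IsBranchPoint.unique {a : K} (ha : a ≠ 0) {t₁ t₂ s₁ s₂ : K⟦X⟧}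
    (ht : IsBranchPoint a t₁ t₂) (hs : IsBranchPoint a s₁ s₂) : t₁ = s₁ ∧ t₂ = s₂ := by
  obtain ⟨ht₁, ht₂, htc, htq⟩ := ht
  obtain ⟨hs₁, hs₂, hsc, hsq⟩ := hs
  have h := sub_mem_of_branch_congr ha ⊥ ht₁ ht₂ hs₁ hs₂
    (by rw [Ideal.mem_bot]; linear_combination htc - hsc)
    (by rw [Ideal.mem_bot]; linear_combination htq - hsq)
  simpa only [Ideal.mem_bot, sub_eq_zero] using h

-- The solution at `a = 1` truncated after `g⁶`: the default `0` is not its true tail.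
def branchCoeff₁ : ℕ → K
  | 0 => -1 | 1 => -2 / 3 | 2 => 2 / 3 | 3 => -76 / 81 | 4 => 110 / 81 | 5 => -412 / 243
  | 6 => 6748 / 6561 | _ => 0

def branchCoeff₂ : ℕ → K
  | 0 => 1 | 1 => 2 / 3 | 2 => -2 / 9 | 3 => -4 / 81 | 4 => 170 / 243 | 5 => -580 / 243
  | 6 => 42476 / 6561 | _ => 0

theorem X_pow_seven_dvd_branch_cubic :
    X ^ 7 ∣ 2 * (mk branchCoeff₁ : K⟦X⟧) ^ 3 - 3 * mk branchCoeff₁ * mk branchCoeff₂ - 1 := by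
  refine X_pow_dvd_iff.mpr fun m hm => ?_
  simp only [pow_three, map_sub, coeff_one, ← map_ofNat C, mul_assoc, coeff_C_mul]
  interval_cases m <;>
    simp only [coeff_mul, Finset.Nat.sum_antidiagonal_succ, Finset.Nat.antidiagonal_zero,
      Finset.sum_singleton, coeff_mk] <;>
    norm_num [branchCoeff₁, branchCoeff₂]

theorem X_pow_seven_dvd_branch_quartic :
    X ^ 7 ∣ 3 * (mk branchCoeff₁ : K⟦X⟧) ^ 4 - 3 * mk branchCoeff₂ ^ 2 - 4 * X := by
  refine X_pow_dvd_iff.mpr fun m hm => ?_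
  simp only [pow_succ, pow_zero, one_mul, map_sub, coeff_X, ← map_ofNat C, mul_assoc, coeff_C_mul]
  interval_cases m <;>
    simp only [coeff_mul, Finset.Nat.sum_antidiagonal_succ, Finset.Nat.antidiagonal_zero,
      Finset.sum_singleton, coeff_mk] <;>
    norm_num [branchCoeff₁, branchCoeff₂]

theorem IsBranchPoint.coeff_eq_branchCoeff {u v : K⟦X⟧} (h : IsBranchPoint 1 u v) {n : ℕ}
    (hn : n < 7) : coeff n u = branchCoeff₁ n ∧ coeff n v = branchCoeff₂ n := by
  obtain ⟨hu, hv, hc, hq⟩ := h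
  rw [one_pow, map_one] at hc
  have h := sub_mem_of_branch_congr one_ne_zero (Ideal.span {X ^ 7}) hu hv
    (s₁ := mk branchCoeff₁) (s₂ := mk branchCoeff₂)
    (by simp [branchCoeff₁]) (by simp [branchCoeff₂])
    (Ideal.mem_span_singleton.mpr ?_) (Ideal.mem_span_singleton.mpr ?_)
  · simp only [Ideal.mem_span_singleton, X_pow_dvd_iff, map_sub, coeff_mk, sub_eq_zero] at h
    exact ⟨h.1 n hn, h.2 n hn⟩
  · convert (dvd_neg.mpr (X_pow_seven_dvd_branch_cubic (K := K))) using 1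
    linear_combination hc
  · convert (dvd_neg.mpr (X_pow_seven_dvd_branch_quartic (K := K))) using 1
    linear_combination hq

theorem IsBranchPoint.coeff_eq_of_lt_seven {a : K} (ha : a ≠ 0) {t₁ t₂ : K⟦X⟧}
    (h : IsBranchPoint a t₁ t₂) {n : ℕ} (hn : n < 7) :
    coeff n t₁ = a / a ^ (4 * n) * branchCoeff₁ n ∧
      coeff n t₂ = a ^ 2 / a ^ (4 * n) * branchCoeff₂ n := by
  obtain ⟨u, v, huv⟩ := exists_isBranchPoint_one (K := K)
  obtain ⟨rfl, rfl⟩ := h.unique ha (huv.rescale ha)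
  obtain ⟨hu, hv⟩ := huv.coeff_eq_branchCoeff hn
  simp only [coeff_C_mul, coeff_rescale, hu, hv, inv_pow, ← pow_mul]
  constructor <;> ring

theorem existsUnique_isBranchPoint {a : K} (ha : a ≠ 0) :
    ∃! p : K⟦X⟧ × K⟦X⟧, IsBranchPoint a p.1 p.2 := by
  obtain ⟨u, v, huv⟩ := exists_isBranchPoint_one (K := K)
  exact ⟨(_, _), huv.rescale ha, fun p hp => Prod.ext_iff.mpr (hp.unique ha (huv.rescale ha))⟩

end Field

theorem pow_three_rpow_div_three {a : ℝ} (ha : 0 ≤ a) (k : ℝ) : (a ^ 3) ^ (k / 3) = a ^ k := by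
  rw [← Real.rpow_natCast, ← Real.rpow_mul ha]
  ring_nf

/-- In `ℝ⟦g⟧` there is a unique pair of power series `(t₁, t₂)` with constant
coefficients `(−μ₃^{1/3}, μ₃^{2/3})` satisfying `2t₁³ − 3t₁t₂ − μ₃ = 0` and
`3t₁⁴ − 3t₂² − 4g = 0`, and their coefficients of `g¹,…,g⁶` are as displayed
(the branch-point data of the m = 3 multicritical CDT genus-zero disk amplitude
with `μ₂ = 0`). -/
theorem m3_multicritical_CDT_branch_point_series (μ₃ : ℝ) (hμ : 0 < μ₃) :
    (∃! p : PowerSeries ℝ × PowerSeries ℝ,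
      PowerSeries.constantCoeff p.1 = -μ₃ ^ ((1 : ℝ) / 3) ∧
      PowerSeries.constantCoeff p.2 = μ₃ ^ ((2 : ℝ) / 3) ∧
      2 * p.1 ^ 3 - 3 * p.1 * p.2 - PowerSeries.C μ₃ = 0 ∧
      3 * p.1 ^ 4 - 3 * p.2 ^ 2 - 4 * PowerSeries.X = 0)
    ∧ ∀ t₁ t₂ : PowerSeries ℝ,
        PowerSeries.constantCoeff t₁ = -μ₃ ^ ((1 : ℝ) / 3) →
        PowerSeries.constantCoeff t₂ = μ₃ ^ ((2 : ℝ) / 3) →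
        2 * t₁ ^ 3 - 3 * t₁ * t₂ - PowerSeries.C μ₃ = 0 →
        3 * t₁ ^ 4 - 3 * t₂ ^ 2 - 4 * PowerSeries.X = 0 →
        (PowerSeries.coeff 1 t₁ = -2 / (3 * μ₃) ∧
         PowerSeries.coeff 2 t₁ = 2 / (3 * μ₃ ^ ((7 : ℝ) / 3)) ∧
         PowerSeries.coeff 3 t₁ = -76 / (81 * μ₃ ^ ((11 : ℝ) / 3)) ∧
         PowerSeries.coeff 4 t₁ = 110 / (81 * μ₃ ^ 5) ∧
         PowerSeries.coeff 5 t₁ = -412 / (243 * μ₃ ^ ((19 : ℝ) / 3)) ∧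
         PowerSeries.coeff 6 t₁ = 6748 / (6561 * μ₃ ^ ((23 : ℝ) / 3))) ∧
        (PowerSeries.coeff 1 t₂ = 2 / (3 * μ₃ ^ ((2 : ℝ) / 3)) ∧
         PowerSeries.coeff 2 t₂ = -2 / (9 * μ₃ ^ 2) ∧
         PowerSeries.coeff 3 t₂ = -4 / (81 * μ₃ ^ ((10 : ℝ) / 3)) ∧
         PowerSeries.coeff 4 t₂ = 170 / (243 * μ₃ ^ ((14 : ℝ) / 3)) ∧
         PowerSeries.coeff 5 t₂ = -580 / (243 * μ₃ ^ 6) ∧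
         PowerSeries.coeff 6 t₂ = 42476 / (6561 * μ₃ ^ ((22 : ℝ) / 3))) := by
  obtain ⟨a, ha, rfl⟩ : ∃ a : ℝ, 0 < a ∧ μ₃ = a ^ 3 := ⟨μ₃ ^ ((1 : ℝ) / 3), by positivity, by
    rw [← Real.rpow_natCast, ← Real.rpow_mul hμ.le]; norm_num⟩
  simp only [pow_three_rpow_div_three ha.le, Real.rpow_one, Real.rpow_ofNat]
  refine ⟨existsUnique_isBranchPoint ha.ne', fun t₁ t₂ h₁ h₂ h₃ h₄ => ?_⟩
  have h (n : ℕ) (hn : n < 7) := IsBranchPoint.coeff_eq_of_lt_seven ha.ne' ⟨h₁, h₂, h₃, h₄⟩ hn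
  refine ⟨⟨?_, ?_, ?_, ?_, ?_, ?_⟩, ?_, ?_, ?_, ?_, ?_, ?_⟩ <;>
    simp (disch := norm_num) only [h, branchCoeff₁, branchCoeff₂] <;>
    field_simp
end
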